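/- arXiv:1104.0595 — 3 statements merged into one kernel-verified Lean document; each statement's English description precedes it below -/
import Mathlib

section
/- A function f : A^n → B is determined by oddsupp (i.e., factors as f = f* ∘ oddsupp for some f* : P(A) → B) if and only if f is totally symmetric and the identification minor f(x_1, x_1, x_3, ..., x_n) does not depend on x_1. -/
/-!
If `f` factors through `oddSupp`, symmetry is clear, and replacing a pair of equal entries
`a, a` by `b, b` changes every count by an even number, so the odd support is unchanged.

Conversely, symmetry lets us move the identified pair of the minor to any two positions, so
any pair of equal entries `c, c` may be replaced by `c₀, c₀` for a fixed `c₀`. Repeating this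
brings every tuple, without changing `f` or the odd support, to a tuple in which each value
other than `c₀` occurs at most once. There the count of `c ≠ c₀` is `1` or `0` according as
`c` is in the odd support or not, and the count of `c₀` is what remains; so two such tuples
with the same odd support are permutations of each other, and `f` agrees on them.
-/

open Finset

section Fibers

variable {ι A : Type*} [Fintype ι] [DecidableEq A]

def oddSupp (x : ι → A) : Set A := {c | Odd #{i | x i = c}}

lemma card_fiber_comp_perm (x : ι → A) (σ : Equiv.Perm ι) (c : A) :
    #{i | (x ∘ σ) i = c} = #{i | x i = c} := by
  simp only [card_filter, Function.comp_apply]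
  exact Equiv.sum_comp σ (fun i => if x i = c then 1 else 0)

lemma oddSupp_comp_perm (x : ι → A) (σ : Equiv.Perm ι) : oddSupp (x ∘ σ) = oddSupp x := by
  ext c
  simp only [oddSupp, Set.mem_ofPred_eq, card_fiber_comp_perm]

lemma exists_perm_comp_eq_of_card_fiber_eq {x y : ι → A}
    (h : ∀ c, #{i | x i = c} = #{i | y i = c}) : ∃ σ : Equiv.Perm ι, y ∘ σ = x := by
  have e : ∀ c, {i // x i = c} ≃ {i // y i = c} := fun c =>
    Fintype.equivOfCardEq (by simpa only [Fintype.card_subtype] using h c)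
  exact ⟨Equiv.ofFiberEquiv e, funext (Equiv.ofFiberEquiv_map e)⟩

lemma card_fiber_eq_of_forall_ne {x y : ι → A} (c₀ : A)
    (h : ∀ c ≠ c₀, #{i | x i = c} = #{i | y i = c}) (c : A) :
    #{i | x i = c} = #{i | y i = c} := by
  rcases ne_or_eq c c₀ with hc | rfl
  · exact h c hc
  set S := insert c (univ.image x ∪ univ.image y)
  have hsum : ∀ z : ι → A, (∀ i, z i ∈ S) →
      #{i | z i = c} + ∑ d ∈ S.erase c, #{i | z i = d} = Fintype.card ι := by
    intro z hz
    rw [add_sum_erase S (fun d => #{i | z i = d}) (mem_insert_self c _),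
      ← card_eq_sum_card_fiberwise (fun i _ => hz i), card_univ]
  have hrest : ∑ d ∈ S.erase c, #{i | x i = d} = ∑ d ∈ S.erase c, #{i | y i = d} :=
    sum_congr rfl fun d hd => h d (ne_of_mem_erase hd)
  have hx := hsum x (by simp [S])
  have hy := hsum y (by simp [S])
  omega

end Fibers

section UpdatePair

variable {ι A : Type*} [DecidableEq ι]

def updatePair (x : ι → A) (i j : ι) (a : A) : ι → A :=
  fun k => if k = i ∨ k = j then a else x k

lemma updatePair_eq_self {x : ι → A} {i j : ι} {a : A} (hi : x i = a) (hj : x j = a) :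
    updatePair x i j a = x := by
  funext k
  unfold updatePair
  split_ifs with hk
  · rcases hk with rfl | rfl <;> symm <;> assumption
  · rfl

lemma updatePair_comp_perm (x : ι → A) (i j : ι) (a : A) (σ : Equiv.Perm ι) :
    updatePair x i j a ∘ σ = updatePair (x ∘ σ) (σ.symm i) (σ.symm j) a := by
  funext k
  simp only [updatePair, Function.comp_apply, Equiv.eq_symm_apply]

variable [Fintype ι] [DecidableEq A]

lemma card_fiber_updatePair {i j : ι} (hij : i ≠ j) (x : ι → A) (a c : A) :
    #{k | updatePair x i j a k = c} = #{k ∈ {i, j}ᶜ | x k = c} + if a = c then 2 else 0 := by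
  rw [card_filter, card_filter, ← sum_compl_add_sum {i, j}, sum_pair hij]
  congr 1
  · refine sum_congr rfl fun k hk => ?_
    simp only [mem_compl, mem_insert, mem_singleton] at hk
    simp only [updatePair, if_neg hk]
  · simp only [updatePair, true_or, or_true, if_true]
    split_ifs <;> rfl

lemma oddSupp_updatePair {i j : ι} (hij : i ≠ j) (x : ι → A) (a b : A) :
    oddSupp (updatePair x i j a) = oddSupp (updatePair x i j b) := by
  ext c
  simp only [oddSupp, Set.mem_ofPred_eq, card_fiber_updatePair hij, Nat.odd_add]
  split_ifs <;> simp

lemma card_ne_updatePair_lt {x : ι → A} {i : ι} (j : ι) {c₀ : A} (hi : x i ≠ c₀) :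
    #{k | updatePair x i j c₀ k ≠ c₀} < #{k | x k ≠ c₀} := by
  refine card_lt_card ((ssubset_iff_of_subset fun k => ?_).mpr
    ⟨i, by simpa using hi, by simp [updatePair]⟩)
  simp only [mem_filter_univ]
  unfold updatePair
  split_ifs <;> simp_all

end UpdatePair

lemma exists_perm_apply_eq_apply_eq {ι : Type*} [DecidableEq ι] {i₀ i₁ i j : ι}
    (h₀₁ : i₀ ≠ i₁) (hij : i ≠ j) : ∃ σ : Equiv.Perm ι, σ i₀ = i ∧ σ i₁ = j := by
  set k := Equiv.swap i₀ i j
  have hk : i₀ ≠ k := fun h =>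
    hij (by rwa [eq_comm, Equiv.swap_apply_eq_iff, Equiv.swap_apply_left, eq_comm] at h)
  refine ⟨Equiv.swap i₀ i * Equiv.swap i₁ k, ?_, ?_⟩
  · simp [Equiv.swap_apply_of_ne_of_ne h₀₁ hk]
  · simp [k]

lemma apply_updatePair_eq_of_symmetric {ι A B : Type*} [DecidableEq ι] {f : (ι → A) → B}
    (hsymm : ∀ (σ : Equiv.Perm ι) x, f (x ∘ σ) = f x)
    {i₀ i₁ : ι} (h₀₁ : i₀ ≠ i₁)
    (hminor : ∀ x a b, f (updatePair x i₀ i₁ a) = f (updatePair x i₀ i₁ b))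
    {i j : ι} (hij : i ≠ j) (x : ι → A) (a b : A) :
    f (updatePair x i j a) = f (updatePair x i j b) := by
  obtain ⟨σ, hσ₀, hσ₁⟩ := exists_perm_apply_eq_apply_eq h₀₁ hij
  have hcomp : ∀ c, updatePair x i j c ∘ σ = updatePair (x ∘ σ) i₀ i₁ c := fun c => by
    rw [updatePair_comp_perm, ← hσ₀, ← hσ₁, Equiv.symm_apply_apply, Equiv.symm_apply_apply]
  rw [← hsymm σ, hcomp, hminor, ← hcomp, hsymm]

section Reduction

variable {ι A B : Type*} [Fintype ι] [DecidableEq ι] [DecidableEq A] {f : (ι → A) → B}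
  (hpair : ∀ (x : ι → A) (i j : ι) (a b : A), i ≠ j →
    f (updatePair x i j a) = f (updatePair x i j b))
include hpair

lemma exists_card_fiber_le_one_of_ne (c₀ : A) (x : ι → A) :
    ∃ y, f y = f x ∧ oddSupp y = oddSupp x ∧ ∀ c ≠ c₀, #{i | y i = c} ≤ 1 := by
  induction h : #{i | x i ≠ c₀} using Nat.strong_induction_on generalizing x with
  | _ m ih =>
  by_cases hred : ∀ c ≠ c₀, #{i | x i = c} ≤ 1
  · exact ⟨x, rfl, rfl, hred⟩
  obtain ⟨c, hc, hcard⟩ : ∃ c ≠ c₀, 1 < #{i | x i = c} := by simpa using hred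
  obtain ⟨i, hi, j, hj, hij⟩ := one_lt_card.mp hcard
  rw [mem_filter_univ] at hi hj
  obtain ⟨y, hfy, hoy, hy⟩ := ih _ (h ▸ card_ne_updatePair_lt j (hi ▸ hc)) _ rfl
  refine ⟨y, ?_, ?_, hy⟩
  · rw [hfy, hpair x i j c₀ c hij, updatePair_eq_self hi hj]
  · rw [hoy, oddSupp_updatePair hij x c₀ c, updatePair_eq_self hi hj]

lemma apply_eq_of_oddSupp_eq (hsymm : ∀ (σ : Equiv.Perm ι) x, f (x ∘ σ) = f x)
    {x y : ι → A} (h : oddSupp x = oddSupp y) : f x = f y := by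
  rcases isEmpty_or_nonempty ι with hι | ⟨⟨i₀⟩⟩
  · rw [Subsingleton.elim x y]
  obtain ⟨x', hfx, hox, hx'⟩ := exists_card_fiber_le_one_of_ne hpair (x i₀) x
  obtain ⟨y', hfy, hoy, hy'⟩ := exists_card_fiber_le_one_of_ne hpair (x i₀) y
  have hodd : oddSupp x' = oddSupp y' := by rw [hox, hoy, h]
  have hcard : ∀ c, #{i | x' i = c} = #{i | y' i = c} := by
    refine card_fiber_eq_of_forall_ne (x i₀) fun c hc => ?_
    have hpar : Odd #{i | x' i = c} ↔ Odd #{i | y' i = c} := Set.ext_iff.mp hodd c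
    have hx'c := hx' c hc
    have hy'c := hy' c hc
    rw [Nat.odd_iff, Nat.odd_iff] at hpar
    omega
  obtain ⟨σ, hσ⟩ := exists_perm_comp_eq_of_card_fiber_eq hcard
  rw [← hfx, ← hfy, ← hσ, hsymm]

end Reduction

theorem determined_by_oddsupp_iff_general
    (A B : Type*) [DecidableEq A] [Nontrivial A] (n : ℕ)
    (f : (Fin (n + 2) → A) → B) :
    (∃ fstar : Set A → B, ∀ x : Fin (n + 2) → A,
        f x = fstar {c : A | Odd ((Finset.univ.filter (fun i => x i = c)).card)}) ↔
    ((∀ (π : Equiv.Perm (Fin (n + 2))) (x : Fin (n + 2) → A), f (x ∘ π) = f x) ∧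
      (∀ (x : Fin (n + 2) → A) (a b : A),
        f (fun k => if k = 0 ∨ k = 1 then a else x k) =
        f (fun k => if k = 0 ∨ k = 1 then b else x k))) := by
  change (∃ fstar : Set A → B, ∀ x, f x = fstar (oddSupp x)) ↔
    (∀ (σ : Equiv.Perm (Fin (n + 2))) x, f (x ∘ σ) = f x) ∧
      ∀ x a b, f (updatePair x 0 1 a) = f (updatePair x 0 1 b)
  constructor
  · rintro ⟨fstar, hf⟩
    exact ⟨fun σ x => by rw [hf, hf, oddSupp_comp_perm],
      fun x a b => by rw [hf, hf, oddSupp_updatePair Fin.zero_ne_one]⟩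
  · rintro ⟨hsymm, hminor⟩
    have hpair := fun x i j a b (hij : i ≠ j) =>
      apply_updatePair_eq_of_symmetric hsymm Fin.zero_ne_one hminor hij x a b
    exact ⟨fun S => f (Function.invFun oddSupp S), fun x =>
      apply_eq_of_oddSupp_eq hpair hsymm (Function.invFun_eq ⟨x, rfl⟩).symm⟩

/-- `f : A^n → B` is determined by `oddsupp` iff `f` is totally
symmetric and the identification minor `f(x₁,x₁,x₃,…,xₙ)` does not depend on `x₁`. -/
theorem determined_by_oddsupp_iff
    (A B : Type*) [DecidableEq A] [Nontrivial A] [Nontrivial B] (n : ℕ)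
    (f : (Fin (n + 2) → A) → B) :
    (∃ fstar : Set A → B, ∀ x : Fin (n + 2) → A,
        f x = fstar {c : A | Odd ((Finset.univ.filter (fun i => x i = c)).card)}) ↔
    ((∀ (π : Equiv.Perm (Fin (n + 2))) (x : Fin (n + 2) → A), f (x ∘ π) = f x) ∧
      (∀ (x : Fin (n + 2) → A) (a b : A),
        f (fun k => if k = 0 ∨ k = 1 then a else x k) =
        f (fun k => if k = 0 ∨ k = 1 then b else x k))) :=
  determined_by_oddsupp_iff_general A B n f
end

section
/- Let (B, +) be a group with neutral element 0, let A be a set, and let f : A^n → B with n ≥ 3 and 1 ≤ p ≤ n. Then the following are equivalent: (i) f depends on all n variables and the quasi-arity of f equals n − p; (ii) there exist functions g, h : A^n → B with f = g + h, h vanishing on all tuples with a repeated coordinate, h not identically 0, and g having essential arity n − p. Moreover, such a decomposition is unique. -/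
/-- An essential variable of a function of several variables. -/
def Essential {A B : Type*} {n : ℕ} (g : (Fin n → A) → B) (i : Fin n) : Prop :=
  ∃ (x : Fin n → A) (a : A), g (Function.update x i a) ≠ g x

/-- The essential arity: the number of essential variables. -/
noncomputable def essArity {A B : Type*} {n : ℕ} (g : (Fin n → A) → B) : ℕ :=
  Nat.card {i : Fin n // Essential g i}

/-- The identification minor `f_{i ← j}`, substituting `x_j` for `x_i`. -/
def idMinor {A B : Type*} {n : ℕ} (f : (Fin n → A) → B) (i j : Fin n) : (Fin n → A) → B :=
  fun x => f (Function.update x i (x j))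

/-- The quasi-arity: the minimum essential arity among all supports of `f`, i.e.
functions agreeing with `f` on all tuples with a repeated coordinate. -/
noncomputable def quasiArity {A B : Type*} {n : ℕ} (f : (Fin n → A) → B) : ℕ :=
  sInf {m | ∃ g : (Fin n → A) → B,
    (∀ x : Fin n → A, (∃ i j : Fin n, i ≠ j ∧ x i = x j) → g x = f x) ∧ essArity g = m}

/-!
Two functions that agree on all tuples with a repeated coordinate, each failing to depend on
some variable (`i₁` resp. `i₂`), are equal once `n ≥ 3`: choose `k ∉ {i₁, i₂}` and move from
`x` to the tuple `y` with `y i₁ = y i₂ = x k`, alternately changing an inessential variable and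
passing between the two functions on a tuple with a repeat. Hence a support of `f` of essential
arity `< n` is unique; it is the `g` of the decomposition, with `h = -g + f`, and it exists
precisely when `f` has quasi-arity `< n`. If `f` itself had an inessential variable it would
equal `g`, forcing `h = 0`.
-/

section

open Function

variable {A B : Type*} {n : ℕ}

def HasRepeat (x : Fin n → A) : Prop :=
  ∃ i j : Fin n, i ≠ j ∧ x i = x j

theorem essArity_eq_iff (g : (Fin n → A) → B) : essArity g = n ↔ ∀ i, Essential g i := by
  refine ⟨fun h i => ?_, fun h => ?_⟩
  · by_contra hi
    have := Finite.card_subtype_lt (p := Essential g) hi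
    rw [Nat.card_fin] at this
    exact this.ne h
  · rw [essArity, Nat.card_congr (Equiv.subtypeUnivEquiv h), Nat.card_fin]

theorem essArity_le (g : (Fin n → A) → B) : essArity g ≤ n :=
  (Finite.card_subtype_le (Essential g)).trans_eq (Nat.card_fin n)

theorem exists_not_essential {g : (Fin n → A) → B} (h : essArity g ≠ n) :
    ∃ i, ¬ Essential g i :=
  not_forall.mp (mt (essArity_eq_iff g).mpr h)

theorem not_essential_iff {g : (Fin n → A) → B} {i : Fin n} :
    ¬ Essential g i ↔ ∀ (x : Fin n → A) (a : A), g (update x i a) = g x := by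
  simp [Essential]

theorem update_update_self_comm [DecidableEq A] (x : Fin n → A) (i j : Fin n) (a : A) :
    update (update x i a) j a = update (update x j a) i a := by
  rcases eq_or_ne i j with rfl | hij
  · rfl
  · exact update_comm hij a a x

theorem apply_eq_apply_update_update {g₁ g₂ : (Fin n → A) → B}
    (hd : ∀ x, HasRepeat x → g₁ x = g₂ x) {i₁ i₂ k : Fin n}
    (h₁ : ¬ Essential g₁ i₁) (h₂ : ¬ Essential g₂ i₂) (hk : k ≠ i₁) (x : Fin n → A) :
    g₁ x = g₂ (update (update x i₁ (x k)) i₂ (x k)) := by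
  rw [not_essential_iff] at h₁ h₂
  have hrep : HasRepeat (update x i₁ (x k)) :=
    ⟨i₁, k, hk.symm, by rw [update_self, update_of_ne hk]⟩
  rw [h₂, ← hd _ hrep, h₁]

theorem eq_of_eqOn_hasRepeat_of_not_essential (hn : 3 ≤ n) {g₁ g₂ : (Fin n → A) → B}
    (hd : ∀ x, HasRepeat x → g₁ x = g₂ x) {i₁ i₂ : Fin n}
    (h₁ : ¬ Essential g₁ i₁) (h₂ : ¬ Essential g₂ i₂) : g₁ = g₂ := by
  classical
  funext x
  obtain ⟨k, hk₁, hk₂⟩ := Fin.exists_ne_and_ne_of_two_lt i₁ i₂ (by omega)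
  have hy : HasRepeat (update (update x i₁ (x k)) i₂ (x k)) := ⟨i₂, k, hk₂.symm, by
    rw [update_self, update_of_ne hk₂, update_of_ne hk₁]⟩
  calc g₁ x = g₂ (update (update x i₁ (x k)) i₂ (x k)) :=
        apply_eq_apply_update_update hd h₁ h₂ hk₁ x
    _ = g₁ (update (update x i₁ (x k)) i₂ (x k)) := (hd _ hy).symm
    _ = g₂ x := by
      rw [apply_eq_apply_update_update (fun x hx => (hd x hx).symm) h₂ h₁ hk₂ x,
        update_update_self_comm]

theorem eq_of_eqOn_hasRepeat_of_essArity_ne (hn : 3 ≤ n) {g₁ g₂ : (Fin n → A) → B}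
    (hd : ∀ x, HasRepeat x → g₁ x = g₂ x) (h₁ : essArity g₁ ≠ n) (h₂ : essArity g₂ ≠ n) :
    g₁ = g₂ := by
  obtain ⟨i₁, hi₁⟩ := exists_not_essential h₁
  obtain ⟨i₂, hi₂⟩ := exists_not_essential h₂
  exact eq_of_eqOn_hasRepeat_of_not_essential hn hd hi₁ hi₂

theorem exists_eqOn_hasRepeat_essArity_eq_quasiArity (f : (Fin n → A) → B) :
    ∃ g : (Fin n → A) → B, (∀ x, HasRepeat x → g x = f x) ∧ essArity g = quasiArity f :=
  Nat.sInf_mem (s := {m | ∃ g : (Fin n → A) → B, (∀ x, HasRepeat x → g x = f x) ∧ essArity g = m})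
    ⟨essArity f, f, fun _ _ => rfl, rfl⟩

theorem quasiArity_le_essArity {f g : (Fin n → A) → B} (hd : ∀ x, HasRepeat x → g x = f x) :
    quasiArity f ≤ essArity g :=
  Nat.sInf_le ⟨g, hd, rfl⟩

theorem quasiArity_eq_essArity (hn : 3 ≤ n) {f g : (Fin n → A) → B}
    (hd : ∀ x, HasRepeat x → g x = f x) (hg : essArity g ≠ n) :
    quasiArity f = essArity g := by
  obtain ⟨g', hd', hg'⟩ := exists_eqOn_hasRepeat_essArity_eq_quasiArity f
  have hle := quasiArity_le_essArity hd
  have hg'n : essArity g' ≠ n := by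
    have := essArity_le g
    omega
  rw [← hg', eq_of_eqOn_hasRepeat_of_essArity_ne hn
    (fun x hx => (hd' x hx).trans (hd x hx).symm) hg'n hg]

theorem essArity_eq_of_eqOn_hasRepeat (hn : 3 ≤ n) {f g : (Fin n → A) → B}
    (hd : ∀ x, HasRepeat x → g x = f x) (hg : essArity g ≠ n) (hfg : f ≠ g) :
    essArity f = n := by
  refine (essArity_eq_iff f).mpr fun i => by_contra fun hi => hfg ?_
  obtain ⟨j, hj⟩ := exists_not_essential hg
  exact eq_of_eqOn_hasRepeat_of_not_essential hn (fun x hx => (hd x hx).symm) hi hj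

end

theorem decomposition_by_quasiArity_general
    (A B : Type*) [AddGroup B]
    (n p : ℕ) (hn : 3 ≤ n) (hp1 : 1 ≤ p)
    (f : (Fin n → A) → B) :
    ((essArity f = n ∧ quasiArity f = n - p) ↔
      (∃ g h : (Fin n → A) → B,
        (∀ x, f x = g x + h x) ∧
        (∀ x : Fin n → A, (∃ i j : Fin n, i ≠ j ∧ x i = x j) → h x = 0) ∧
        (∃ x, h x ≠ 0) ∧
        essArity g = n - p)) ∧
    (∀ g₁ h₁ g₂ h₂ : (Fin n → A) → B,
      (∀ x, f x = g₁ x + h₁ x) →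
      (∀ x : Fin n → A, (∃ i j : Fin n, i ≠ j ∧ x i = x j) → h₁ x = 0) →
      (∃ x, h₁ x ≠ 0) → essArity g₁ = n - p →
      (∀ x, f x = g₂ x + h₂ x) →
      (∀ x : Fin n → A, (∃ i j : Fin n, i ≠ j ∧ x i = x j) → h₂ x = 0) →
      (∃ x, h₂ x ≠ 0) → essArity g₂ = n - p →
      g₁ = g₂ ∧ h₁ = h₂) := by
  have hnp : n - p ≠ n := by omega
  have eqOn_of_decomp {g h : (Fin n → A) → B} (hf : ∀ x, f x = g x + h x)
      (hh : ∀ x, HasRepeat x → h x = 0) : ∀ x, HasRepeat x → g x = f x := fun x hx => by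
    rw [hf x, hh x hx, add_zero]
  refine ⟨⟨fun ⟨hf, hq⟩ => ?_, fun ⟨g, h, hfgh, hh, ⟨x₀, hx₀⟩, hg⟩ => ?_⟩, ?_⟩
  · obtain ⟨g, hd, hg⟩ := exists_eqOn_hasRepeat_essArity_eq_quasiArity f
    refine ⟨g, fun x => -g x + f x, fun x => (add_neg_cancel_left _ _).symm,
      fun x hx => show -g x + f x = 0 by rw [hd x hx, neg_add_cancel], ?_, hg.trans hq⟩
    by_contra! h0
    have hfg : f = g := funext fun x => (neg_add_eq_zero.mp (h0 x)).symm
    rw [hfg, hg, hq] at hf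
    exact hnp hf
  · have hd := eqOn_of_decomp hfgh hh
    have hfg : f ≠ g := fun hfg => hx₀ (by simpa [hfg] using hfgh x₀)
    exact ⟨essArity_eq_of_eqOn_hasRepeat hn hd (hg ▸ hnp) hfg,
      (quasiArity_eq_essArity hn hd (hg ▸ hnp)).trans hg⟩
  · intro g₁ h₁ g₂ h₂ hf₁ hh₁ _ hg₁ hf₂ hh₂ _ hg₂
    have hg : g₁ = g₂ := eq_of_eqOn_hasRepeat_of_essArity_ne hn
      (fun x hx => (eqOn_of_decomp hf₁ hh₁ x hx).trans (eqOn_of_decomp hf₂ hh₂ x hx).symm)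
      (hg₁ ▸ hnp) (hg₂ ▸ hnp)
    subst hg
    exact ⟨rfl, funext fun x => add_left_cancel ((hf₁ x).symm.trans (hf₂ x))⟩

/-- For a group `B`, `f : A^n → B` (`n ≥ 3`, `1 ≤ p ≤ n`) depends on all
variables and has quasi-arity `n − p` iff `f = g + h` where `h` vanishes on tuples with
a repeated coordinate, `h ≢ 0`, and `ess g = n − p`; the decomposition is unique. -/
theorem decomposition_by_quasiArity
    (A B : Type*) [Nontrivial A] [Nontrivial B] [AddGroup B]
    (n p : ℕ) (hn : 3 ≤ n) (hp1 : 1 ≤ p) (hpn : p ≤ n)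
    (f : (Fin n → A) → B) :
    ((essArity f = n ∧ quasiArity f = n - p) ↔
      (∃ g h : (Fin n → A) → B,
        (∀ x, f x = g x + h x) ∧
        (∀ x : Fin n → A, (∃ i j : Fin n, i ≠ j ∧ x i = x j) → h x = 0) ∧
        (∃ x, h x ≠ 0) ∧
        essArity g = n - p)) ∧
    (∀ g₁ h₁ g₂ h₂ : (Fin n → A) → B,
      (∀ x, f x = g₁ x + h₁ x) →
      (∀ x : Fin n → A, (∃ i j : Fin n, i ≠ j ∧ x i = x j) → h₁ x = 0) →
      (∃ x, h₁ x ≠ 0) → essArity g₁ = n - p →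
      (∀ x, f x = g₂ x + h₂ x) →
      (∀ x : Fin n → A, (∃ i j : Fin n, i ≠ j ∧ x i = x j) → h₂ x = 0) →
      (∃ x, h₂ x ≠ 0) → essArity g₂ = n - p →
      g₁ = g₂ ∧ h₁ = h₂) :=
  decomposition_by_quasiArity_general A B n p hn hp1 f
end

section
/- Let F be a field of characteristic 0, n ≥ 3, and f ∈ F[x_1,...,x_n]. Suppose that for each pair of indices the identification minor f(x_1, x_1, x_3,...,x_n) does not depend on the identified variable (as holds when f is determined by oddsupp restricted to tuples with a repetition). Then for all a, b, x_4, ..., x_n ∈ F: f(a, a, a, x_4,...,x_n) = f(b, b, b, x_4,...,x_n). -/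
/-! Restricting `p` to the line on which the coordinates in `S` all equal a parameter `t` gives
a one-variable polynomial whose derivative, by the chain rule, is the restriction of
`∑ k ∈ S, ∂ₖ p`; in characteristic `0` the restriction is constant iff that derivative vanishes.
So the hypothesis makes `∂ᵢ f + ∂ⱼ f` vanish wherever `xᵢ = xⱼ`, and on the triple diagonal the
three pair sums add up to `2 (∂₀ f + ∂₁ f + ∂₂ f)`, which therefore vanishes as well. -/

open MvPolynomial

namespace MvPolynomial

variable {R σ : Type*}

theorem polynomial_eval_aeval [CommSemiring R] (t : R) (g : σ → Polynomial R)
    (p : MvPolynomial σ R) :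
    (aeval g p).eval t = eval (fun k => (g k).eval t) p := by
  rw [aeval_def, polynomial_eval_eval₂]
  congr 1
  ext; simp

theorem derivative_aeval [CommSemiring R] [Fintype σ] (g : σ → Polynomial R)
    (p : MvPolynomial σ R) :
    Polynomial.derivative (aeval g p) =
      ∑ k, aeval g (pderiv k p) * Polynomial.derivative (g k) := by
  classical
  induction p using MvPolynomial.induction_on with
  | C a => simp
  | add p q hp hq => simp [hp, hq, add_mul, Finset.sum_add_distrib]
  | mul_X p k hp =>
    simp only [map_mul, aeval_X, Polynomial.derivative_mul, hp, Finset.sum_mul,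
      Derivation.leibniz, pderiv_X, Pi.single_apply, apply_ite, smul_eq_mul, mul_one, mul_zero,
      map_add, map_zero, add_mul, ite_mul, zero_mul, Finset.sum_add_distrib, Finset.sum_ite_eq,
      Finset.mem_univ, ↓reduceIte]
    rw [add_comm]
    congr 1
    exact Finset.sum_congr rfl fun _ _ => by ring

variable [DecidableEq σ]

noncomputable def lineRestrict [CommSemiring R] (S : Finset σ) (x : σ → R)
    (p : MvPolynomial σ R) : Polynomial R :=
  aeval (S.piecewise (fun _ => Polynomial.X) fun k => Polynomial.C (x k)) p

theorem eval_lineRestrict [CommSemiring R] (S : Finset σ) (x : σ → R) (p : MvPolynomial σ R)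
    (t : R) : (lineRestrict S x p).eval t = eval (S.piecewise (fun _ => t) x) p := by
  rw [lineRestrict, polynomial_eval_aeval]
  congr 2
  funext k
  by_cases hk : k ∈ S <;> simp [hk]

theorem derivative_lineRestrict [CommSemiring R] [Fintype σ] (S : Finset σ) (x : σ → R)
    (p : MvPolynomial σ R) :
    Polynomial.derivative (lineRestrict S x p) = lineRestrict S x (∑ k ∈ S, pderiv k p) := by
  have h : ∀ k, Polynomial.derivative
      (S.piecewise (fun _ => Polynomial.X) (fun k => Polynomial.C (x k)) k) =
      if k ∈ S then 1 else 0 := by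
    intro k
    by_cases hk : k ∈ S <;> simp [hk]
  simp only [lineRestrict, derivative_aeval, h, mul_ite, mul_one, mul_zero, Finset.sum_ite_mem,
    Finset.univ_inter, map_sum]

theorem forall_eval_piecewise_eq_iff_sum_pderiv [CommRing R] [IsDomain R] [CharZero R]
    [Fintype σ] (S : Finset σ) (x : σ → R) (p : MvPolynomial σ R) :
    (∀ a b, eval (S.piecewise (fun _ => a) x) p = eval (S.piecewise (fun _ => b) x) p) ↔
      ∀ t, eval (S.piecewise (fun _ => t) x) (∑ k ∈ S, pderiv k p) = 0 := by
  simp only [← eval_lineRestrict, ← derivative_lineRestrict]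
  constructor
  · intro h t
    have hconst : lineRestrict S x p = Polynomial.C ((lineRestrict S x p).eval 0) :=
      Polynomial.funext fun a => by simpa using h a 0
    rw [hconst, Polynomial.derivative_C, Polynomial.eval_zero]
  · intro h a b
    have hder : Polynomial.derivative (lineRestrict S x p) = 0 :=
      Polynomial.funext fun t => by simpa using h t
    rw [Polynomial.eq_C_of_derivative_eq_zero hder]
    simp

theorem eval_pderiv_add_pderiv_eq_zero [CommRing R] [IsDomain R] [CharZero R] [Fintype σ]
    {p : MvPolynomial σ R} {i j : σ} (hij : i ≠ j)
    (hp : ∀ (x : σ → R) (a b : R), eval (fun k => if k = i ∨ k = j then a else x k) p =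
      eval (fun k => if k = i ∨ k = j then b else x k) p)
    {y : σ → R} (hy : y i = y j) : eval y (pderiv i p + pderiv j p) = 0 := by
  have hpair : ∀ (x : σ → R) (a : R), (fun k => if k = i ∨ k = j then a else x k) =
      ({i, j} : Finset σ).piecewise (fun _ => a) x := by
    intro x a
    funext k
    simp [Finset.piecewise]
  have hy' : ({i, j} : Finset σ).piecewise (fun _ => y i) y = y := by
    funext k
    by_cases hk : k = i ∨ k = j
    · rcases hk with rfl | rfl <;> simp [hy]
    · simp [hk]
  have h := (forall_eval_piecewise_eq_iff_sum_pderiv {i, j} y p).1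
    (fun a b => by simpa only [hpair] using hp y a b) (y i)
  rwa [hy', Finset.sum_pair hij] at h

theorem eval_sum_pderiv_eq_zero_of_pairs [CommRing R] [IsDomain R] [CharZero R] [Fintype σ]
    {p : MvPolynomial σ R}
    (hp : ∀ i j : σ, i ≠ j → ∀ (x : σ → R) (a b : R),
      eval (fun k => if k = i ∨ k = j then a else x k) p =
      eval (fun k => if k = i ∨ k = j then b else x k) p)
    {i j k : σ} (hij : i ≠ j) (hik : i ≠ k) (hjk : j ≠ k)
    {y : σ → R} (hyj : y j = y i) (hyk : y k = y i) :
    eval y (∑ l ∈ {i, j, k}, pderiv l p) = 0 := by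
  have h : (2 : R) * eval y (∑ l ∈ {i, j, k}, pderiv l p) =
      eval y (pderiv i p + pderiv j p) + eval y (pderiv i p + pderiv k p) +
        eval y (pderiv j p + pderiv k p) := by
    rw [Finset.sum_insert (by simp [hij, hik]), Finset.sum_pair hjk]
    simp only [map_add]
    ring
  rw [eval_pderiv_add_pderiv_eq_zero hij (hp i j hij) hyj.symm,
    eval_pderiv_add_pderiv_eq_zero hik (hp i k hik) hyk.symm,
    eval_pderiv_add_pderiv_eq_zero hjk (hp j k hjk) (hyj.trans hyk.symm)] at h
  simpa using h

end MvPolynomial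

/-- Over a field of characteristic `0` (`n ≥ 3`), if for each pair
`i ≠ j` the identification minor of `f` obtained by identifying `x_i` with `x_j` does
not depend on the identified variable, then the value of `f` does not change when three
identified entries are replaced by another common value. -/
theorem triple_replacement
    (F : Type*) [Field F] [CharZero F] (n : ℕ) (hn : 3 ≤ n)
    (f : MvPolynomial (Fin n) F)
    (hminor : ∀ i j : Fin n, i ≠ j → ∀ (x : Fin n → F) (a b : F),
      eval (fun k => if k = i ∨ k = j then a else x k) f =
      eval (fun k => if k = i ∨ k = j then b else x k) f) :
    ∀ (x : Fin n → F) (a b : F),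
      eval (fun k : Fin n => if (k : ℕ) < 3 then a else x k) f =
      eval (fun k : Fin n => if (k : ℕ) < 3 then b else x k) f := by
  intro x a b
  let S : Finset (Fin n) := {⟨0, by omega⟩, ⟨1, by omega⟩, ⟨2, by omega⟩}
  have hS : ∀ c, (fun k : Fin n => if (k : ℕ) < 3 then c else x k) =
      S.piecewise (fun _ => c) x := by
    intro c
    funext k
    simp only [Finset.piecewise, S, Finset.mem_insert, Finset.mem_singleton, Fin.ext_iff]
    exact if_congr (by omega) rfl rfl
  rw [hS, hS]
  refine (forall_eval_piecewise_eq_iff_sum_pderiv S x f).2 (fun t => ?_) a b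
  exact eval_sum_pderiv_eq_zero_of_pairs hminor (by simp [Fin.ext_iff]) (by simp [Fin.ext_iff])
    (by simp [Fin.ext_iff]) (by simp [S]) (by simp [S])
end
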